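/- (Completeness) Let Z, N_1, …, N_k be independent random variables on a probability space with laws P_Z and P_{N_1}, …, P_{N_k} respectively, taking values in standard Borel spaces 𝒵 and 𝒩_1, …, 𝒩_k, and let X_i := f_i(Z, N_i), where each f_i : 𝒵 × 𝒩_i → 𝒳_i is a measurable embedding (injective, measurable, with measurable inverse on its image) into a standard Borel space 𝒳_i; let P_{X_i} denote the law of X_i and P_X the joint law of (X_1, …, X_k). Then there exist autoencoders (E_i, D_i), i = 1,…,k, each optimal, such that for every i the joint measure Q^{(i)} — the pushforward of P_{X_i} ⊗ (⊗_{j≠i} P_{N_j}) under the map sending (x, (n_j)_{j≠i}) to the k-tuple with i-th coordinate x and j-th coordinate D_j(π^Z(E_i(x)), n_j) for j ≠ i — equals P_X. -/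

import Mathlib

/-!
Take `D_i := f_i` and let `E_i` be a measurable left inverse of the embedding `f_i`. Then
`E_i (X_i) = (Z, N_i)`, whose law is `P_Z ⊗ P_{N_i}` by independence, and `D_i ∘ E_i` is the
identity on the range of `f_i`, which carries `P_{X_i}`. Since `π^Z (E_i X_i) = Z`, the measure
`Q^{(i)}` regenerates every `X_j = f_j (Z, N_j)`, `j ≠ i`, from `Z` and fresh independent noise
`N_j ~ P_{N_j}`: it is the image of `P_Z ⊗ (⊗_j P_{N_j})` under `(z, n) ↦ (f_j (z, n_j))_j`,
which is `P_X`.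
-/

open MeasureTheory Function

section

variable {ι : Type*} {β : ι → Type*}

lemma Equiv.piSplitAt_symm_eq_dite [DecidableEq ι] (i : ι) :
    ⇑(Equiv.piSplitAt i β).symm =
      fun p j => if h : j = i then cast (congrArg β h.symm) p.1 else p.2 ⟨j, h⟩ := by
  funext p j
  by_cases h : j = i
  · subst h; simp
  · simp [h]

variable [∀ i, MeasurableSpace (β i)] {Z : Type*} [MeasurableSpace Z] {X : ι → Type*}
  [∀ i, MeasurableSpace (X i)]

lemma measurable_piSplitAt_symm [DecidableEq ι] (i : ι) :
    Measurable (Equiv.piSplitAt i β).symm := by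
  refine measurable_pi_lambda _ fun j => ?_
  by_cases h : j = i
  · subst h
    simpa using measurable_fst
  · simp only [Equiv.piSplitAt_symm_apply, h, dite_false]
    exact (measurable_pi_apply _).comp measurable_snd

lemma measurePreserving_piSplitAt_symm [DecidableEq ι] [Fintype ι] (μ : ∀ i, Measure (β i))
    [∀ i, SigmaFinite (μ i)] (i : ι) :
    MeasurePreserving (Equiv.piSplitAt i β).symm
      ((μ i).prod (Measure.pi fun j : {j // j ≠ i} => μ j)) (Measure.pi μ) := by
  refine ⟨measurable_piSplitAt_symm i, (Measure.pi_eq fun s hs => ?_).symm⟩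
  have hpre : (Equiv.piSplitAt i β).symm ⁻¹' Set.univ.pi s =
      s i ×ˢ Set.univ.pi fun j : {j // j ≠ i} => s j := by
    ext ⟨a, b⟩
    simp only [Set.mem_preimage, Set.mem_univ_pi, Set.mem_prod]
    refine ⟨fun h => ⟨by simpa using h i, fun j => by simpa [j.2] using h j⟩, ?_⟩
    rintro ⟨ha, hb⟩ j
    by_cases h : j = i
    · subst h; simpa using ha
    · simpa [h] using hb ⟨j, h⟩
  rw [Measure.map_apply (measurable_piSplitAt_symm i) (.univ_pi hs), hpre, Measure.prod_prod,
    Measure.pi_pi, Fintype.prod_eq_mul_prod_compl i,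
    ← Finset.prod_subtype {i}ᶜ (by simp) (fun j => μ j (s j))]

lemma map_prodMk_eval_eq_prod [DecidableEq ι] [Fintype ι] {Ω : Type*} [MeasurableSpace Ω]
    {P : Measure Ω} {ζ : Ω → Z} {η : ∀ i, Ω → β i} (hζ : Measurable ζ)
    (hη : ∀ i, Measurable (η i)) {ν : Measure Z} [SFinite ν] {μ : ∀ i, Measure (β i)}
    [∀ i, IsProbabilityMeasure (μ i)]
    (h : P.map (fun ω => (ζ ω, fun i => η i ω)) = ν.prod (Measure.pi μ)) (i : ι) :
    P.map (fun ω => (ζ ω, η i ω)) = ν.prod (μ i) := by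
  have hproj : Measurable (Prod.map id (eval i) : Z × (∀ j, β j) → Z × β i) :=
    measurable_id.prodMap (measurable_pi_apply i)
  calc P.map (fun ω => (ζ ω, η i ω))
      = (P.map fun ω => (ζ ω, fun j => η j ω)).map (Prod.map id (eval i)) := by
        rw [Measure.map_map hproj (hζ.prodMk (measurable_pi_lambda _ hη))]; rfl
    _ = (ν.map id).prod ((Measure.pi μ).map (eval i)) := by
        rw [h, Measure.map_prod_map _ _ measurable_id (measurable_pi_apply i)]
    _ = ν.prod (μ i) := by simp [Measure.pi_map_eval]

/-- The map pushing `P_{X_i} ⊗ (⊗_{j ≠ i} P_{N_j})` forward to `Q^{(i)}`, for the encoder `g`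
and the decoders `f`. -/
def regenerate [DecidableEq ι] (f : ∀ j, Z × β j → X j) (i : ι) (g : X i → Z × β i) :
    X i × (∀ j : {j // j ≠ i}, β j) → ∀ j, X j :=
  fun p => (Equiv.piSplitAt i X).symm (p.1, fun j => f j ((g p.1).1, p.2 j))

lemma measurable_regenerate [DecidableEq ι] {f : ∀ j, Z × β j → X j}
    (hf : ∀ j, Measurable (f j)) {i : ι} {g : X i → Z × β i} (hg : Measurable g) :
    Measurable (regenerate f i g) :=
  (measurable_piSplitAt_symm i).comp <| measurable_fst.prodMk <| measurable_pi_lambda _ fun j =>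
    (hf j).comp <| (measurable_fst.comp (hg.comp measurable_fst)).prodMk
      ((measurable_pi_apply j).comp measurable_snd)

lemma measurable_pi_apply_prodMk {f : ∀ j, Z × β j → X j} (hf : ∀ j, Measurable (f j)) :
    Measurable fun (q : Z × ∀ j, β j) j => f j (q.1, q.2 j) :=
  measurable_pi_lambda _ fun j =>
    (hf j).comp (measurable_fst.prodMk ((measurable_pi_apply j).comp measurable_snd))

lemma map_regenerate_prod [DecidableEq ι] [Fintype ι] {f : ∀ j, Z × β j → X j}
    (hf : ∀ j, Measurable (f j)) {i : ι} {g : X i → Z × β i} (hg : Measurable g)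
    (hgf : LeftInverse g (f i)) (ν : Measure Z) [SFinite ν] (μ : ∀ j, Measure (β j))
    [∀ j, SigmaFinite (μ j)] :
    (((ν.prod (μ i)).map (f i)).prod (Measure.pi fun j : {j // j ≠ i} => μ j)).map
        (regenerate f i g) =
      (ν.prod (Measure.pi μ)).map fun q j => f j (q.1, q.2 j) := by
  have hφ := ((MeasurePreserving.id ν).prod (measurePreserving_piSplitAt_symm μ i)).comp
    (measurePreserving_prodAssoc ν (μ i) (Measure.pi fun j : {j // j ≠ i} => μ j))
  have hcomm : (fun (q : Z × ∀ j, β j) j => f j (q.1, q.2 j)) ∘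
      (Prod.map id (Equiv.piSplitAt i β).symm ∘ MeasurableEquiv.prodAssoc) =
      regenerate f i g ∘ Prod.map (f i) id := by
    funext ⟨⟨z, n⟩, m⟩ j
    by_cases h : j = i
    · subst h; simp [regenerate, hgf _, MeasurableEquiv.prodAssoc]
    · simp [regenerate, h, hgf _, MeasurableEquiv.prodAssoc]
  rw [← hφ.map_eq, Measure.map_map (measurable_pi_apply_prodMk hf) hφ.measurable, hcomm,
    ← Measure.map_map (measurable_regenerate hf hg) ((hf i).prodMap measurable_id),
    ← Measure.map_prod_map _ _ (hf i) measurable_id, Measure.map_id]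

end

theorem completeness_general {k : ℕ}
    {Ω : Type*} [MeasurableSpace Ω] (P : Measure Ω)
    (Zsp : Type*) [MeasurableSpace Zsp]
    (Nsp : Fin k → Type*) [∀ i, MeasurableSpace (Nsp i)]
    (Xsp : Fin k → Type*) [∀ i, MeasurableSpace (Xsp i)]
    (ζ : Ω → Zsp) (η : ∀ i, Ω → Nsp i)
    (hζ : Measurable ζ) (hη : ∀ i, Measurable (η i))
    (PZ : Measure Zsp) [IsProbabilityMeasure PZ]
    (PN : ∀ i, Measure (Nsp i)) [∀ i, IsProbabilityMeasure (PN i)]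
    (hindep : P.map (fun ω => (ζ ω, fun i => η i ω)) = PZ.prod (Measure.pi fun i => PN i))
    (f : ∀ i, Zsp × Nsp i → Xsp i) (hf : ∀ i, MeasurableEmbedding (f i)) :
    ∃ (E : ∀ i, Xsp i → Zsp × Nsp i) (D : ∀ i, Zsp × Nsp i → Xsp i),
      (∀ i, Measurable (E i)) ∧ (∀ i, Measurable (D i)) ∧
      -- each autoencoder is optimal: zero reconstruction loss …
      (∀ i, ∀ᵐ x ∂(P.map fun ω => f i (ζ ω, η i ω)), D i (E i x) = x) ∧
      -- … and the encoded distribution matches the latent distribution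
      (∀ i, (P.map fun ω => f i (ζ ω, η i ω)).map (E i) = PZ.prod (PN i)) ∧
      -- the induced joint measure Q^{(i)} recovers the true coupling P_X, for every i
      (∀ i : Fin k,
        Measure.map
          (fun p : Xsp i × (∀ j : {j : Fin k // j ≠ i}, Nsp j) =>
            fun j : Fin k =>
              if h : j = i then cast (congrArg Xsp h.symm) p.1
              else D j ((E i p.1).1, p.2 ⟨j, h⟩))
          ((P.map fun ω => f i (ζ ω, η i ω)).prod
            (Measure.pi fun j : {j : Fin k // j ≠ i} => PN j))
        = P.map (fun ω => fun j : Fin k => f j (ζ ω, η j ω))) := by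
  have : Nonempty Zsp := nonempty_of_isProbabilityMeasure PZ
  have (i : Fin k) : Nonempty (Nsp i) := nonempty_of_isProbabilityMeasure (PN i)
  have hX (i : Fin k) : P.map (fun ω => f i (ζ ω, η i ω)) = (PZ.prod (PN i)).map (f i) := by
    rw [← map_prodMk_eval_eq_prod hζ hη hindep i,
      Measure.map_map (hf i).measurable (hζ.prodMk (hη i))]
    rfl
  refine ⟨fun i => (hf i).invFun, f, fun i => (hf i).measurable_invFun,
    fun i => (hf i).measurable, fun i => ?_, fun i => ?_, fun i => ?_⟩
  · rw [hX]
    filter_upwards [ae_map_mem_range (f i) (hf i).measurableSet_range _] with x ⟨y, hy⟩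
    rw [← hy, (hf i).leftInverse_invFun y]
  · rw [hX, Measure.map_map (hf i).measurable_invFun (hf i).measurable,
      (hf i).leftInverse_invFun.comp_eq_id, Measure.map_id]
  · calc _ = (((PZ.prod (PN i)).map (f i)).prod (Measure.pi fun j : {j // j ≠ i} => PN j)).map
            (regenerate f i (hf i).invFun) := by
          rw [hX]
          unfold regenerate
          rw [Equiv.piSplitAt_symm_eq_dite]
      _ = (PZ.prod (Measure.pi PN)).map fun q j => f j (q.1, q.2 j) :=
          map_regenerate_prod (fun j => (hf j).measurable) (hf i).measurable_invFun
            (hf i).leftInverse_invFun PZ PN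
      _ = _ := by
          rw [← hindep, Measure.map_map (measurable_pi_apply_prodMk fun j => (hf j).measurable)
            (hζ.prodMk (measurable_pi_lambda _ hη))]
          rfl

/-- Completeness: if `X_i := f_i(Z, N_i)` where `Z, N_1, …, N_k` are independent with laws
`P_Z, P_{N_i}` (independence and laws expressed by the joint law of `(Z, (N_i)_i)` being the
product `P_Z ⊗ (⊗_i P_{N_i})`) and each `f_i` is a measurable embedding, then there exist
optimal autoencoders `(E_i, D_i)` such that for every `i` the induced joint measure `Q^{(i)}` —
the pushforward of `P_{X_i} ⊗ (⊗_{j≠i} P_{N_j})` under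
`(x, (n_j)_{j≠i}) ↦ (tuple with i-th coordinate x and j-th coordinate D_j(π^Z(E_i x), n_j))` —
equals the joint law `P_X` of `(X_1, …, X_k)`. -/
theorem completeness {k : ℕ}
    {Ω : Type*} [MeasurableSpace Ω] (P : Measure Ω) [IsProbabilityMeasure P]
    (Zsp : Type*) [MeasurableSpace Zsp] [StandardBorelSpace Zsp]
    (Nsp : Fin k → Type*) [∀ i, MeasurableSpace (Nsp i)] [∀ i, StandardBorelSpace (Nsp i)]
    (Xsp : Fin k → Type*) [∀ i, MeasurableSpace (Xsp i)] [∀ i, StandardBorelSpace (Xsp i)]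
    (ζ : Ω → Zsp) (η : ∀ i, Ω → Nsp i)
    (hζ : Measurable ζ) (hη : ∀ i, Measurable (η i))
    (PZ : Measure Zsp) [IsProbabilityMeasure PZ]
    (PN : ∀ i, Measure (Nsp i)) [∀ i, IsProbabilityMeasure (PN i)]
    (hPZ : P.map ζ = PZ) (hPN : ∀ i, P.map (η i) = PN i)
    (hindep : P.map (fun ω => (ζ ω, fun i => η i ω)) = PZ.prod (Measure.pi fun i => PN i))
    (f : ∀ i, Zsp × Nsp i → Xsp i) (hf : ∀ i, MeasurableEmbedding (f i)) :
    ∃ (E : ∀ i, Xsp i → Zsp × Nsp i) (D : ∀ i, Zsp × Nsp i → Xsp i),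
      (∀ i, Measurable (E i)) ∧ (∀ i, Measurable (D i)) ∧
      -- each autoencoder is optimal: zero reconstruction loss …
      (∀ i, ∀ᵐ x ∂(P.map fun ω => f i (ζ ω, η i ω)), D i (E i x) = x) ∧
      -- … and the encoded distribution matches the latent distribution
      (∀ i, (P.map fun ω => f i (ζ ω, η i ω)).map (E i) = PZ.prod (PN i)) ∧
      -- the induced joint measure Q^{(i)} recovers the true coupling P_X, for every i
      (∀ i : Fin k,
        Measure.map
          (fun p : Xsp i × (∀ j : {j : Fin k // j ≠ i}, Nsp j) =>
            fun j : Fin k =>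
              if h : j = i then cast (congrArg Xsp h.symm) p.1
              else D j ((E i p.1).1, p.2 ⟨j, h⟩))
          ((P.map fun ω => f i (ζ ω, η i ω)).prod
            (Measure.pi fun j : {j : Fin k // j ≠ i} => PN j))
        = P.map (fun ω => fun j : Fin k => f j (ζ ω, η j ω))) :=
  completeness_general P Zsp Nsp Xsp ζ η hζ hη PZ PN hindep f hf
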